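/- arXiv:1409.6808 — 3 statements merged into one kernel-verified Lean document; each statement's English description precedes it below -/
import Mathlib

section
/- Let N > 0 and dM ≥ 0 be real numbers. For γ ∈ [0,1], let S(γ) denote the supremum of d1 + d2 over the two-user DoF polytope D(N,γ,dM). Then S(γ) = dM + 2N if and only if 2Nγ ≤ dM; consequently, the supremum of the set {γ ∈ [0,1] : S(γ) = dM + 2N} equals min(dM/(2N), 1). -/
/-- The two-user DoF region (polytope) of the MIMO BC with a parallel
multicast channel (Theorem 1 of the paper). -/
def DoFRegion (N γ dM : ℝ) : Set (ℝ × ℝ) :=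
  {p : ℝ × ℝ |
    0 ≤ p.1 ∧ 0 ≤ p.2 ∧
    p.1 ≤ dM + N ∧
    p.2 ≤ dM + N ∧
    p.1 + p.2 ≤ dM + 2 * N ∧
    2 * p.1 + p.2 ≤ 2 * (dM + N) + N * (1 - γ) ∧
    p.1 + 2 * p.2 ≤ 2 * (dM + N) + N * (1 - γ)}

/-- The sum-DoF value as a function of the CSIT delay fraction γ. -/
noncomputable def sumDoF (N dM γ : ℝ) : ℝ :=
  sSup ((fun p : ℝ × ℝ => p.1 + p.2) '' DoFRegion N γ dM)

lemma sumDoF_key (N dM γ : ℝ) (hN : 0 < N) (hdM : 0 ≤ dM) (hγ0 : 0 ≤ γ) (hγ1 : γ ≤ 1) :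
    sumDoF N dM γ = dM + 2 * N ↔ 2 * N * γ ≤ dM := by
  have hne : ((fun p : ℝ × ℝ => p.1 + p.2) '' DoFRegion N γ dM).Nonempty := by
    refine ⟨0, ⟨(0, 0), ?_, by simp⟩⟩
    refine ⟨le_refl _, le_refl _, by simp; linarith, by simp; linarith, by simp; linarith,
      ?_, ?_⟩ <;> simp <;> nlinarith
  have hub : ∀ x ∈ (fun p : ℝ × ℝ => p.1 + p.2) '' DoFRegion N γ dM, x ≤ dM + 2 * N := by
    rintro x ⟨p, ⟨_, _, _, _, h5, _, _⟩, rfl⟩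
    exact h5
  constructor
  · intro h
    have h3 : sumDoF N dM γ ≤ (4 * dM + 6 * N - 2 * N * γ) / 3 := by
      apply csSup_le hne
      rintro x ⟨p, ⟨_, _, _, _, _, h6, h7⟩, rfl⟩
      simp only
      linarith
    rw [h] at h3
    linarith
  · intro h
    apply le_antisymm (csSup_le hne hub)
    apply le_csSup ⟨dM + 2 * N, hub⟩
    refine ⟨((dM + 2 * N) / 2, (dM + 2 * N) / 2), ?_, by ring⟩
    refine ⟨by positivity, by positivity, by simp; linarith, by simp; linarith,
      by dsimp only; linarith, ?_, ?_⟩ <;> · dsimp only; nlinarith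

theorem max_delay_two_user (N dM : ℝ) (hN : 0 < N) (hdM : 0 ≤ dM) :
    (∀ γ ∈ Set.Icc (0 : ℝ) 1, (sumDoF N dM γ = dM + 2 * N ↔ 2 * N * γ ≤ dM)) ∧
    sSup {γ ∈ Set.Icc (0 : ℝ) 1 | sumDoF N dM γ = dM + 2 * N}
      = min (dM / (2 * N)) 1 := by
  have h2N : (0:ℝ) < 2 * N := by linarith
  refine ⟨fun γ hγ => sumDoF_key N dM γ hN hdM hγ.1 hγ.2, ?_⟩
  have hset : {γ ∈ Set.Icc (0 : ℝ) 1 | sumDoF N dM γ = dM + 2 * N}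
      = Set.Icc 0 (min (dM / (2 * N)) 1) := by
    ext γ
    simp only [Set.mem_setOf_eq, Set.mem_Icc, le_min_iff]
    constructor
    · rintro ⟨⟨h0, h1⟩, hs⟩
      have := (sumDoF_key N dM γ hN hdM h0 h1).mp hs
      exact ⟨h0, (le_div_iff₀ h2N).mpr (by linarith), h1⟩
    · rintro ⟨h0, hd, h1⟩
      have h2 : 2 * N * γ ≤ dM := by
        have := (le_div_iff₀ h2N).mp hd; linarith
      exact ⟨⟨h0, h1⟩, (sumDoF_key N dM γ hN hdM h0 h1).mpr h2⟩
  rw [hset]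
  exact csSup_Icc (le_min (by positivity) zero_le_one)
end

section
/- Let K ≥ 1 and 1 ≤ L ≤ K be integers, let d : Fin K → ℝ, and let C be a real number. Suppose that for every permutation σ of Fin K one has ∑_{k=0}^{L−1} d(σ(k)) + (L/K)·∑_{k=L}^{K−1} d(σ(k)) ≤ C. Then ∑_{k=0}^{K−1} d(k) ≤ K²·C/(L(2K−L)). -/
theorem symmetrization_partial
    (K L : ℕ) (hK : 1 ≤ K) (hL1 : 1 ≤ L) (hLK : L ≤ K) (d : Fin K → ℝ) (C : ℝ)
    (h : ∀ σ : Equiv.Perm (Fin K),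
        (∑ k ∈ Finset.univ.filter (fun k : Fin K => (k : ℕ) < L), d (σ k)) +
          ((L : ℝ) / (K : ℝ)) *
            ∑ k ∈ Finset.univ.filter (fun k : Fin K => L ≤ (k : ℕ)), d (σ k) ≤ C) :
    ∑ k : Fin K, d k ≤ (K : ℝ) ^ 2 * C / ((L : ℝ) * (2 * (K : ℝ) - (L : ℝ))) := by
  have k0 : Fin K := ⟨0, hK⟩
  set A := Finset.univ.filter (fun k : Fin K => (k : ℕ) < L) with hAdef
  set B := Finset.univ.filter (fun k : Fin K => L ≤ (k : ℕ)) with hBdef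
  set c : ℝ := ∑ σ : Equiv.Perm (Fin K), d (σ k0) with hc
  have hcol : ∀ k : Fin K, ∑ σ : Equiv.Perm (Fin K), d (σ k) = c := by
    intro k
    rw [hc]
    refine Fintype.sum_equiv (Equiv.mulRight (Equiv.swap k0 k)) _ _ ?_
    intro σ
    simp [Equiv.Perm.mul_apply, Equiv.swap_apply_right]
  have hA : A.card = L := by
    have hmap : A.map Fin.valEmbedding = Finset.range L := by
      ext x
      simp only [hAdef, Finset.mem_map, Finset.mem_filter, Finset.mem_univ, true_and,
        Fin.valEmbedding_apply, Finset.mem_range]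
      constructor
      · rintro ⟨k, hk, rfl⟩; exact hk
      · intro hx; exact ⟨⟨x, lt_of_lt_of_le hx hLK⟩, hx, rfl⟩
    have := congrArg Finset.card hmap
    simpa using this
  have hB : B.card = K - L := by
    have := Finset.card_filter_add_card_filter_not
      (s := (Finset.univ : Finset (Fin K))) (p := fun k : Fin K => (k : ℕ) < L)
    simp only [not_lt, Finset.card_univ, Fintype.card_fin] at this
    rw [hBdef]
    rw [hAdef] at hA
    omega
  have hAsum : ∑ σ : Equiv.Perm (Fin K), ∑ k ∈ A, d (σ k) = (L : ℝ) * c := by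
    rw [Finset.sum_comm]
    rw [Finset.sum_congr rfl (fun k _ => hcol k), Finset.sum_const, hA, nsmul_eq_mul]
  have hBsum : ∑ σ : Equiv.Perm (Fin K), ∑ k ∈ B, d (σ k) = ((K - L : ℕ) : ℝ) * c := by
    rw [Finset.sum_comm]
    rw [Finset.sum_congr rfl (fun k _ => hcol k), Finset.sum_const, hB, nsmul_eq_mul]
  have hKc : (K : ℝ) * c = (Nat.factorial K : ℝ) * ∑ k : Fin K, d k := by
    have h1 : ∑ k : Fin K, ∑ σ : Equiv.Perm (Fin K), d (σ k)
        = ∑ σ : Equiv.Perm (Fin K), ∑ k : Fin K, d (σ k) := Finset.sum_comm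
    rw [Finset.sum_congr rfl (fun k _ => hcol k), Finset.sum_const, Finset.card_univ,
      Fintype.card_fin, nsmul_eq_mul] at h1
    rw [h1]
    rw [Finset.sum_congr rfl (fun σ _ => Equiv.sum_comp σ d), Finset.sum_const,
      Finset.card_univ, Fintype.card_perm, Fintype.card_fin, nsmul_eq_mul]
  have hsum : (L : ℝ) * c + ((L : ℝ) / (K : ℝ)) * (((K - L : ℕ) : ℝ) * c)
      ≤ (Nat.factorial K : ℝ) * C := by
    have h1 : ∑ σ : Equiv.Perm (Fin K),
        ((∑ k ∈ A, d (σ k)) + ((L : ℝ) / (K : ℝ)) * ∑ k ∈ B, d (σ k))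
        ≤ ∑ _σ : Equiv.Perm (Fin K), C := Finset.sum_le_sum (fun σ _ => h σ)
    rw [Finset.sum_const, Finset.card_univ, Fintype.card_perm, Fintype.card_fin,
      nsmul_eq_mul, Finset.sum_add_distrib, ← Finset.mul_sum, hAsum, hBsum] at h1
    exact h1
  -- algebra
  have hKpos : (0 : ℝ) < K := by exact_mod_cast hK
  have hLpos : (0 : ℝ) < L := by exact_mod_cast hL1
  have hLK' : (L : ℝ) ≤ K := by exact_mod_cast hLK
  have hKL : ((K - L : ℕ) : ℝ) = (K : ℝ) - L := by
    push_cast [Nat.cast_sub hLK]; ring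
  have hfacpos : (0 : ℝ) < (Nat.factorial K : ℝ) := by
    exact_mod_cast Nat.factorial_pos K
  have hSc : c = (Nat.factorial K : ℝ) * (∑ k : Fin K, d k) / K := by
    field_simp at hKc ⊢
    linarith [hKc]
  rw [hSc, hKL] at hsum
  set S := ∑ k : Fin K, d k
  have hden : (0 : ℝ) < (L : ℝ) * (2 * (K : ℝ) - L) := by nlinarith
  rw [le_div_iff₀ hden]
  have hKne : (K:ℝ) ≠ 0 := ne_of_gt hKpos
  field_simp at hsum
  nlinarith [hsum, mul_pos hfacpos hKpos, hfacpos, hKpos]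
end

section
/- Let K ≥ 1 be an integer and let N > 0, γ ∈ [0,1], and dM be real numbers with dM ≥ K·(K−1)·N·γ. Let H_K = ∑_{k=1}^{K} 1/k. Then K·N + dM ≤ (K·dM + K·N·γ)/H_K + K·N·(1−γ), i.e., f_p(K, dM) ≤ f_a(1, dM). -/
/-- The m-th harmonic number `H_m = ∑_{k=1}^m 1/k`. -/
noncomputable def harmonic' (m : ℕ) : ℝ := ∑ k ∈ Finset.Icc 1 m, (1 : ℝ) / (k : ℝ)

lemma harmonic'_bounds (K : ℕ) (hK : 1 ≤ K) :
    1 ≤ harmonic' K ∧ harmonic' K ≤ 1 + ((K : ℝ) - 1) / 2 := by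
  induction K with
  | zero => omega
  | succ n ih =>
    rcases Nat.eq_or_lt_of_le hK with h | h
    · simp [harmonic', ← h]
    · have hn : 1 ≤ n := by omega
      obtain ⟨ih1, ih2⟩ := ih hn
      have hstep : harmonic' (n + 1) = harmonic' n + 1 / ((n : ℝ) + 1) := by
        rw [harmonic', Finset.sum_Icc_succ_top (by omega : 1 ≤ n + 1)]
        push_cast [harmonic']
        ring
      have hpos : (0 : ℝ) < (n : ℝ) + 1 := by positivity
      have h2 : (2 : ℝ) ≤ (n : ℝ) + 1 := by
        have : (1 : ℝ) ≤ (n : ℝ) := by exact_mod_cast hn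
        linarith
      have hfrac : 1 / ((n : ℝ) + 1) ≤ 1 / 2 := by
        apply one_div_le_one_div_of_le <;> linarith
      have hfrac0 : 0 ≤ 1 / ((n : ℝ) + 1) := by positivity
      constructor
      · rw [hstep]; linarith
      · rw [hstep]; push_cast; linarith

theorem fpK_le_fa_one
    (K : ℕ) (hK : 1 ≤ K) (N γ dM : ℝ) (hN : 0 < N)
    (hγ0 : 0 ≤ γ) (hγ1 : γ ≤ 1)
    (hdM : (K : ℝ) * ((K : ℝ) - 1) * N * γ ≤ dM) :
    (K : ℝ) * N + dM ≤
      ((K : ℝ) * dM + (K : ℝ) * N * γ) / harmonic' K + (K : ℝ) * N * (1 - γ) := by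
  obtain ⟨hH1, hH2⟩ := harmonic'_bounds K hK
  set H := harmonic' K with hH
  have hHpos : 0 < H := by linarith
  have hKr : (1 : ℝ) ≤ (K : ℝ) := by exact_mod_cast hK
  have hdM0 : 0 ≤ dM := by
    have : 0 ≤ (K : ℝ) * ((K : ℝ) - 1) * N * γ := by
      have h0 : (0 : ℝ) ≤ (K : ℝ) - 1 := by linarith
      have h1 : (0 : ℝ) ≤ (K : ℝ) := by linarith
      positivity
    linarith
  have hKNγ : 0 ≤ (K : ℝ) * N * γ := by
    have h1 : (0 : ℝ) ≤ (K : ℝ) := by linarith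
    positivity
  have key : H * ((K : ℝ) * N * γ + dM) ≤ (K : ℝ) * dM + (K : ℝ) * N * γ := by
    rcases Nat.eq_or_lt_of_le hK with h | h
    · have hK1 : (K : ℝ) = 1 := by exact_mod_cast h.symm
      have : H = 1 := by rw [hK1] at hH2; linarith
      rw [this, hK1]; ring_nf; exact le_rfl
    · have hK2 : (2 : ℝ) ≤ (K : ℝ) := by exact_mod_cast h
      have hhalf : (0 : ℝ) ≤ ((K : ℝ) - 1) / 2 := by linarith
      nlinarith [mul_nonneg (by linarith : (0:ℝ) ≤ (K : ℝ) - H - ((K:ℝ)-1)/2) hdM0,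
        mul_le_mul_of_nonneg_left hdM hhalf,
        mul_nonneg (by linarith : (0:ℝ) ≤ ((K:ℝ)-1)/2 - (H - 1)) hKNγ,
        mul_nonneg (mul_nonneg (by linarith : (0:ℝ) ≤ (K:ℝ)-1)
          (by linarith : (0:ℝ) ≤ (K:ℝ)-2)) hKNγ]
  have hdiv : (K : ℝ) * N * γ + dM ≤ ((K : ℝ) * dM + (K : ℝ) * N * γ) / H :=
    (le_div_iff₀ hHpos).mpr (by linarith [key])
  nlinarith [hdiv]
end
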